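/- arXiv:2306.01154 — 2 statements merged into one kernel-verified Lean document; each statement's English description precedes it below -/
import Mathlib

section
/- For any matrix A ∈ ℝ^{m×n} of rank r, the Frobenius norm satisfies ‖AᵀA‖_F ≤ ‖A‖_F² ≤ √r · ‖AᵀA‖_F. -/
open Matrix
/-- Frobenius norm of a real matrix. -/
noncomputable def frob {m n : ℕ} (A : Matrix (Fin m) (Fin n) ℝ) : ℝ :=
  Real.sqrt (∑ i, ∑ j, (A i j) ^ 2)

/-! With `μ` the (nonnegative) eigenvalues of `AᵀA`, we have `‖A‖_F² = tr (AᵀA) = ∑ μᵢ` and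
`‖AᵀA‖_F² = tr ((AᵀA)²) = ∑ μᵢ²`. The left inequality is then `∑ μᵢ² ≤ (∑ μᵢ)²`, and the right one
is Cauchy–Schwarz over the `r` nonzero eigenvalues. -/

open Finset

theorem Finset.sq_sum_le_card_filter_ne_zero_mul_sum_sq {ι α : Type*} [Semiring α] [LinearOrder α]
    [IsStrictOrderedRing α] [ExistsAddOfLE α] (s : Finset ι) (f : ι → α) :
    (∑ i ∈ s, f i) ^ 2 ≤ #{i ∈ s | f i ≠ 0} * ∑ i ∈ s, f i ^ 2 := by
  rw [← sum_filter_ne_zero,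
    ← sum_filter_of_ne (f := (f · ^ 2)) (p := (f · ≠ 0)) fun _ _ ↦ ne_zero_pow two_ne_zero]
  exact sq_sum_le_card_mul_sum_sq

theorem Matrix.trace_transpose_mul_self_eq_sum_sq {m n R : Type*} [Fintype m] [Fintype n]
    [Semiring R] (A : Matrix m n R) : (Aᵀ * A).trace = ∑ i, ∑ j, A i j ^ 2 := by
  simp only [trace, diag, mul_apply, transpose_apply, sq]
  exact sum_comm

theorem Matrix.IsHermitian.trace_mul_self_eq_sum_sq_eigenvalues {n 𝕜 : Type*} [Fintype n]
    [DecidableEq n] [RCLike 𝕜] {A : Matrix n n 𝕜} (hA : A.IsHermitian) :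
    (A * A).trace = ∑ i, (hA.eigenvalues i : 𝕜) ^ 2 := by
  conv_lhs => rw [hA.spectral_theorem]
  rw [← map_mul, Unitary.conjStarAlgAut_apply, trace_mul_cycle, Unitary.coe_star_mul_self,
    one_mul, diagonal_mul_diagonal, trace_diagonal]
  simp [sq]

theorem frob_eq_sqrt_trace {m n : ℕ} (A : Matrix (Fin m) (Fin n) ℝ) :
    frob A = √(Aᵀ * A).trace := by
  rw [frob, trace_transpose_mul_self_eq_sum_sq]

theorem frob_sq_eq_trace {m n : ℕ} (A : Matrix (Fin m) (Fin n) ℝ) :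
    frob A ^ 2 = (Aᵀ * A).trace := by
  rw [frob, Real.sq_sqrt (by positivity), trace_transpose_mul_self_eq_sum_sq]

/-- For any matrix `A ∈ ℝ^{m×n}` of rank `r`, we have
`‖AᵀA‖_F ≤ ‖A‖_F² ≤ √r · ‖AᵀA‖_F`. -/
theorem frob_transpose_mul_le_sq_le {m n r : ℕ} (A : Matrix (Fin m) (Fin n) ℝ)
    (hr : A.rank = r) :
    frob (Aᵀ * A) ≤ (frob A) ^ 2 ∧ (frob A) ^ 2 ≤ Real.sqrt r * frob (Aᵀ * A) := by
  rw [← conjTranspose_eq_transpose_of_trivial]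
  set B := Aᴴ * A
  have hB : B.IsHermitian := isHermitian_conjTranspose_mul_self A
  set μ := hB.eigenvalues
  have hμ : ∀ i, 0 ≤ μ i := eigenvalues_conjTranspose_mul_self_nonneg A
  have hfrobA : frob A ^ 2 = ∑ i, μ i := by
    rw [frob_sq_eq_trace, ← conjTranspose_eq_transpose_of_trivial, hB.trace_eq_sum_eigenvalues]
    simp [μ]
  have hfrobB : frob B = √(∑ i, μ i ^ 2) := by
    rw [frob_eq_sqrt_trace, ← conjTranspose_eq_transpose_of_trivial, hB.eq,
      hB.trace_mul_self_eq_sum_sq_eigenvalues]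
    simp [μ]
  have hcard : #{i | μ i ≠ 0} = r := by
    rw [← hr, ← rank_conjTranspose_mul_self, hB.rank_eq_card_non_zero_eigs, Fintype.card_subtype]
  rw [hfrobA, hfrobB, ← Real.sqrt_mul (Nat.cast_nonneg r)]
  constructor
  · exact Real.sqrt_le_iff.mpr
      ⟨sum_nonneg fun i _ ↦ hμ i, sum_sq_le_sq_sum_of_nonneg fun i _ ↦ hμ i⟩
  · apply Real.le_sqrt_of_sq_le
    rw [← hcard]
    exact sq_sum_le_card_filter_ne_zero_mul_sum_sq _ _
end

section
/- Under the gradient-descent update W_l(t+1) = (1−ηλ)W_l(t) − η·W_{L:l+1}ᵀ(t)·(W_{L:1}(t) − Φ)·W_{l−1:1}ᵀ(t), suppose at time t there exist unit vectors v_i^{(l)}, u_i^{(l)} with v_i^{(l+1)} = u_i^{(l)}, W_l(t)v_i^{(l)} = ρ(t)u_i^{(l)}, W_l(t)ᵀu_i^{(l)} = ρ(t)v_i^{(l)} for all l ∈ [L], and Φᵀ W_{L:l+1}(t) u_i^{(l)} = 0, Φ W_{l−1:1}ᵀ(t) v_i^{(l)} = 0 for all l ∈ [L]. Then W_l(t+1)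 v_i^{(l)} = ρ(t+1) u_i^{(l)} with ρ(t+1) = ρ(t)(1 − ηλ − η·ρ(t)^{2(L−1)}). -/
open Matrix

/-- `prodSeg W i j = W_j W_{j-1} ⋯ W_i` (equal to `1` when `j < i`). -/
def prodSeg {d : ℕ} (W : ℕ → Matrix (Fin d) (Fin d) ℝ) (i : ℕ) :
    ℕ → Matrix (Fin d) (Fin d) ℝ
  | 0 => 1
  | j + 1 => if j + 1 < i then 1 else W (j + 1) * prodSeg W i j

/-- Euclidean norm of a vector in `ℝ^d`. -/
noncomputable def enorm' {d : ℕ} (x : Fin d → ℝ) : ℝ :=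
  Real.sqrt (∑ k, (x k) ^ 2)

/-!
Along a chain of vectors `x₁, x₂, …` with `W_k x_k = ρ x_{k+1}` and `W_kᵀ x_{k+1} = ρ x_k`
(so `v_l = x_l`, `u_l = x_{l+1}`), every partial product acts as a power of `ρ`. In the gradient
term `W_{L:l+1}ᵀ (W_{L:1} − Φ) W_{l−1:1}ᵀ v_l`, the right factor sends `v_l` to `ρ^{l−1} v_1`,
which `Φ` kills by hypothesis, so only `W_{L:1}` contributes and the term equals
`ρ^{(l−1) + L + (L−l)} u_l = ρ^{2L−1} u_l`. Weight decay contributes `(1 − ηλ) ρ u_l`.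
-/

section SingularChain

variable {d : ℕ} (W : ℕ → Matrix (Fin d) (Fin d) ℝ) (x : ℕ → Fin d → ℝ) (ρ : ℝ)

lemma prodSeg_of_lt {i j : ℕ} (h : j < i) : prodSeg W i j = 1 := by
  cases j with
  | zero => rfl
  | succ j => simp [prodSeg, h]

lemma prodSeg_succ {i j : ℕ} (h : i ≤ j + 1) :
    prodSeg W i (j + 1) = W (j + 1) * prodSeg W i j := by
  simp [prodSeg, Nat.not_lt.mpr h]

lemma prodSeg_mulVec_of_chain {i : ℕ} (hi : 1 ≤ i) :
    ∀ j, i ≤ j + 1 → (∀ k ∈ Finset.Icc i j, W k *ᵥ x k = ρ • x (k + 1)) →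
      prodSeg W i j *ᵥ x i = ρ ^ (j + 1 - i) • x (j + 1)
  | 0, hij, _ => by
    obtain rfl : i = 1 := by omega
    simp [prodSeg]
  | j + 1, hij, hW => by
    rcases Nat.lt_or_ge (j + 1) i with hji | hij'
    · obtain rfl : i = j + 2 := by omega
      simp [prodSeg_of_lt W (Nat.lt_succ_self (j + 1))]
    · have ih := prodSeg_mulVec_of_chain hi j hij'
        fun k hk => hW k (Finset.Icc_subset_Icc le_rfl (Nat.le_succ j) hk)
      rw [prodSeg_succ W hij', ← mulVec_mulVec, ih, mulVec_smul,
        hW (j + 1) (Finset.mem_Icc.mpr ⟨hij', le_rfl⟩), smul_smul,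
        show j + 1 + 1 - i = (j + 1 - i) + 1 by omega, pow_succ]

lemma prodSeg_transpose_mulVec_of_chain {i : ℕ} (hi : 1 ≤ i) :
    ∀ j, i ≤ j + 1 → (∀ k ∈ Finset.Icc i j, (W k)ᵀ *ᵥ x (k + 1) = ρ • x k) →
      (prodSeg W i j)ᵀ *ᵥ x (j + 1) = ρ ^ (j + 1 - i) • x i
  | 0, hij, _ => by
    obtain rfl : i = 1 := by omega
    simp [prodSeg]
  | j + 1, hij, hWt => by
    rcases Nat.lt_or_ge (j + 1) i with hji | hij'
    · obtain rfl : i = j + 2 := by omega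
      simp [prodSeg_of_lt W (Nat.lt_succ_self (j + 1))]
    · have ih := prodSeg_transpose_mulVec_of_chain hi j hij'
        fun k hk => hWt k (Finset.Icc_subset_Icc le_rfl (Nat.le_succ j) hk)
      rw [prodSeg_succ W hij', transpose_mul, ← mulVec_mulVec,
        hWt (j + 1) (Finset.mem_Icc.mpr ⟨hij', le_rfl⟩), mulVec_smul, ih, smul_smul,
        show j + 1 + 1 - i = (j + 1 - i) + 1 by omega, pow_succ']

lemma gradient_mulVec_of_chain (Φ : Matrix (Fin d) (Fin d) ℝ) {l L : ℕ} (hl : l ∈ Finset.Icc 1 L)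
    (hW : ∀ k ∈ Finset.Icc 1 L, W k *ᵥ x k = ρ • x (k + 1))
    (hWt : ∀ k ∈ Finset.Icc 1 L, (W k)ᵀ *ᵥ x (k + 1) = ρ • x k)
    (hΦ : (Φ * (prodSeg W 1 (l - 1))ᵀ) *ᵥ x l = 0) :
    ((prodSeg W (l + 1) L)ᵀ * (prodSeg W 1 L - Φ) * (prodSeg W 1 (l - 1))ᵀ) *ᵥ x l =
      ρ ^ (2 * L - 1) • x (l + 1) := by
  obtain ⟨hl1, hlL⟩ := Finset.mem_Icc.mp hl
  have right : (prodSeg W 1 (l - 1))ᵀ *ᵥ x l = ρ ^ (l - 1) • x 1 := by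
    have := prodSeg_transpose_mulVec_of_chain W x ρ le_rfl (l - 1) (by omega)
      fun k hk => hWt k (Finset.Icc_subset_Icc le_rfl (by omega) hk)
    rwa [Nat.sub_add_cancel hl1] at this
  have full : prodSeg W 1 L *ᵥ x 1 = ρ ^ L • x (L + 1) := by
    simpa using prodSeg_mulVec_of_chain W x ρ le_rfl L (by omega)
      fun k hk => hW k (Finset.Icc_subset_Icc le_rfl le_rfl hk)
  have left : (prodSeg W (l + 1) L)ᵀ *ᵥ x (L + 1) = ρ ^ (L - l) • x (l + 1) := by
    simpa using prodSeg_transpose_mulVec_of_chain W x ρ (i := l + 1) (by omega) L (by omega)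
      fun k hk => hWt k (Finset.Icc_subset_Icc (by omega) le_rfl hk)
  have killed : Φ *ᵥ ((prodSeg W 1 (l - 1))ᵀ *ᵥ x l) = 0 := by rwa [mulVec_mulVec]
  rw [← mulVec_mulVec, ← mulVec_mulVec, sub_mulVec, killed, sub_zero, right, mulVec_smul, full,
    mulVec_smul, mulVec_smul, left, smul_smul, smul_smul, ← pow_add, ← pow_add]
  congr 2
  omega

end SingularChain

theorem gd_step_preserves_direction_general {d m L : ℕ}
    (η lam : ℝ)
    (W Wnext : ℕ → Matrix (Fin d) (Fin d) ℝ) (Φ : Matrix (Fin d) (Fin d) ℝ)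
    (ρ : ℝ) (u v : ℕ → Fin m → (Fin d → ℝ))
    (hupdate : ∀ l ∈ Finset.Icc 1 L,
      Wnext l = (1 - η * lam) • W l -
        η • ((prodSeg W (l + 1) L)ᵀ * (prodSeg W 1 L - Φ) * (prodSeg W 1 (l - 1))ᵀ))
    (hchain : ∀ l ∈ Finset.Icc 1 (L - 1), ∀ i : Fin m, v (l + 1) i = u l i)
    (hWv : ∀ l ∈ Finset.Icc 1 L, ∀ i : Fin m, (W l).mulVec (v l i) = ρ • u l i)
    (hWu : ∀ l ∈ Finset.Icc 1 L, ∀ i : Fin m, (W l)ᵀ.mulVec (u l i) = ρ • v l i)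
    (hD : ∀ l ∈ Finset.Icc 1 L, ∀ i : Fin m,
      (Φ * (prodSeg W 1 (l - 1))ᵀ).mulVec (v l i) = 0) :
    ∀ l ∈ Finset.Icc 1 L, ∀ i : Fin m,
      (Wnext l).mulVec (v l i) =
        (ρ * (1 - η * lam - η * ρ ^ (2 * (L - 1)))) • u l i := by
  intro l hl i
  let x : ℕ → Fin d → ℝ := fun k => if k ≤ L then v k i else u L i
  have hx_v : ∀ k ≤ L, x k = v k i := fun k hk => if_pos hk
  have hx_u : ∀ k ∈ Finset.Icc 1 L, x (k + 1) = u k i := by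
    intro k hk
    obtain ⟨hk1, hkL⟩ := Finset.mem_Icc.mp hk
    rcases hkL.lt_or_eq with hkL | rfl
    · rw [hx_v _ hkL, hchain k (Finset.mem_Icc.mpr ⟨hk1, by omega⟩)]
    · exact if_neg (by omega)
  have hxl := hx_v l (Finset.mem_Icc.mp hl).2
  have gradient := gradient_mulVec_of_chain W x ρ Φ hl
    (fun k hk => by rw [hx_v k (Finset.mem_Icc.mp hk).2, hx_u k hk, hWv k hk])
    (fun k hk => by rw [hx_v k (Finset.mem_Icc.mp hk).2, hx_u k hk, hWu k hk])
    (hxl ▸ hD l hl i)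
  rw [hxl, hx_u l hl] at gradient
  have hexp : 2 * L - 1 = 2 * (L - 1) + 1 := by have := Finset.mem_Icc.mp hl; omega
  rw [hupdate l hl, sub_mulVec, smul_mulVec, smul_mulVec, hWv l hl, gradient, hexp, pow_succ,
    smul_smul, smul_smul, ← sub_smul]
  congr 1
  ring

/-- One step of gradient descent with weight decay preserves the singular direction:
if at time `t` the invariant-subspace conditions hold, then
`W_l(t+1) v_i^{(l)} = ρ(t+1) u_i^{(l)}` with
`ρ(t+1) = ρ(t)(1 − ηλ − η ρ(t)^{2(L−1)})`. -/
theorem gd_step_preserves_direction {d m L : ℕ} (hL : 2 ≤ L)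
    (η lam : ℝ) (hη : 0 ≤ η) (hlam : 0 ≤ lam)
    (W Wnext : ℕ → Matrix (Fin d) (Fin d) ℝ) (Φ : Matrix (Fin d) (Fin d) ℝ)
    (ρ : ℝ) (u v : ℕ → Fin m → (Fin d → ℝ))
    (hupdate : ∀ l ∈ Finset.Icc 1 L,
      Wnext l = (1 - η * lam) • W l -
        η • ((prodSeg W (l + 1) L)ᵀ * (prodSeg W 1 L - Φ) * (prodSeg W 1 (l - 1))ᵀ))
    (hunit_u : ∀ l ∈ Finset.Icc 1 L, ∀ i : Fin m, enorm' (u l i) = 1)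
    (hunit_v : ∀ l ∈ Finset.Icc 1 L, ∀ i : Fin m, enorm' (v l i) = 1)
    (hchain : ∀ l ∈ Finset.Icc 1 (L - 1), ∀ i : Fin m, v (l + 1) i = u l i)
    (hWv : ∀ l ∈ Finset.Icc 1 L, ∀ i : Fin m, (W l).mulVec (v l i) = ρ • u l i)
    (hWu : ∀ l ∈ Finset.Icc 1 L, ∀ i : Fin m, (W l)ᵀ.mulVec (u l i) = ρ • v l i)
    (hC : ∀ l ∈ Finset.Icc 1 L, ∀ i : Fin m,
      (Φᵀ * prodSeg W (l + 1) L).mulVec (u l i) = 0)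
    (hD : ∀ l ∈ Finset.Icc 1 L, ∀ i : Fin m,
      (Φ * (prodSeg W 1 (l - 1))ᵀ).mulVec (v l i) = 0) :
    ∀ l ∈ Finset.Icc 1 L, ∀ i : Fin m,
      (Wnext l).mulVec (v l i) =
        (ρ * (1 - η * lam - η * ρ ^ (2 * (L - 1)))) • u l i :=
  gd_step_preserves_direction_general η lam W Wnext Φ ρ u v hupdate hchain hWv hWu hD
end
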